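/- Let a > −1. Then there exists a constant c = c(a) > 0 such that for every ε ∈ [0,1], every q ≥ 1 with qa ≤ 1+a, and every Lipschitz function u : ℝ → ℝ with compact support, one has c (∫_ℝ (ε² + y²)^{a/2} |u(y)|^q dy)^{1/q} ≤ ∫_ℝ (ε² + y²)^{(1+a)/(2q)} |u'(y)| dy. -/

import Mathlib

noncomputable section

open MeasureTheory Filter Topology Set
open scoped ENNReal NNReal
open intervalIntegral

lemma lipschitz_sub_eq_integral_deriv {K : ℝ≥0} {u : ℝ → ℝ} (hu : LipschitzWith K u)
    {a b : ℝ} (hab : a ≤ b) : u b - u a = ∫ t in Set.Ioc a b, deriv u t := by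
  have hcont : Continuous u := hu.continuous
  set h : ℕ → ℝ := fun n => 1 / (n + 1) with hh
  have hpos : ∀ n, 0 < h n := fun n => by positivity
  have hh0 : Tendsto h atTop (𝓝 0) := tendsto_one_div_add_atTop_nhds_zero_nat
  set A : ℕ → ℝ := fun n => ∫ t in Set.Ioc a b, (u (t + h n) - u t) / h n with hA
  have hlipK : ∀ x y : ℝ, |u x - u y| ≤ K * |x - y| := by
    intro x y
    have := hu.dist_le_mul x y
    rwa [Real.dist_eq, Real.dist_eq] at this
  have claim1 : Tendsto A atTop (𝓝 (∫ t in Set.Ioc a b, deriv u t)) := by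
    apply tendsto_integral_of_dominated_convergence (bound := fun _ => (K : ℝ))
    · intro n
      exact (((by fun_prop : Continuous fun t : ℝ => u (t + h n)).sub hcont).div_const
        _).aestronglyMeasurable
    · exact (integrableOn_const_iff).mpr (Or.inr measure_Ioc_lt_top)
    · intro n
      filter_upwards with t
      rw [Real.norm_eq_abs, abs_div, abs_of_pos (hpos n), div_le_iff₀ (hpos n)]
      calc |u (t + h n) - u t| ≤ K * |t + h n - t| := hlipK _ _
        _ = K * h n := by rw [add_sub_cancel_left, abs_of_pos (hpos n)]
    · have := ae_restrict_of_ae (μ := volume) (s := Set.Ioc a b)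
        hu.ae_differentiableAt_real
      filter_upwards [this] with t ht
      have hd : HasDerivAt u (deriv u t) t := ht.hasDerivAt
      have hslope := hasDerivAt_iff_tendsto_slope.mp hd
      have htend : Tendsto (fun n => t + h n) atTop (𝓝[≠] t) := by
        apply tendsto_nhdsWithin_of_tendsto_nhds_of_eventually_within
        · have : Tendsto (fun n => t + h n) atTop (𝓝 (t + 0)) :=
            tendsto_const_nhds.add hh0
          simpa using this
        · filter_upwards with n
          simp only [Set.mem_compl_iff, Set.mem_singleton_iff]
          have := hpos n; intro hcontra; nlinarith [hpos n]
      have := hslope.comp htend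
      apply this.congr
      intro n
      simp only [Function.comp]
      rw [slope_def_field, add_sub_cancel_left]
  have claim2 : Tendsto A atTop (𝓝 (u b - u a)) := by
    have key : ∀ c : ℝ, Tendsto (fun n => (∫ t in c..(c + h n), u t) / h n) atTop (𝓝 (u c)) := by
      intro c
      rw [tendsto_iff_dist_tendsto_zero]
      apply squeeze_zero (fun n => dist_nonneg) (g := fun n => (K : ℝ) * h n)
      · intro n
        have hInt : ∫ t in c..(c + h n), (u t - u c) =
            (∫ t in c..(c + h n), u t) - h n * u c := by
          rw [intervalIntegral.integral_sub (hcont.intervalIntegrable _ _)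
            (intervalIntegrable_const), intervalIntegral.integral_const]
          simp [smul_eq_mul]
        have hbound : ‖∫ t in c..(c + h n), (u t - u c)‖ ≤ (K * h n) * |c + h n - c| := by
          apply intervalIntegral.norm_integral_le_of_norm_le_const
          intro x hx
          rw [Set.uIoc_of_le (by linarith [hpos n])] at hx
          rw [Real.norm_eq_abs]
          calc |u x - u c| ≤ K * |x - c| := hlipK _ _
            _ ≤ K * h n := by
                have h1 := hx.1; have h2 := hx.2
                have : |x - c| ≤ h n := by rw [abs_of_pos (by linarith)]; linarith
                exact mul_le_mul_of_nonneg_left this (by positivity)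
        rw [Real.dist_eq]
        have : (∫ t in c..(c + h n), u t) / h n - u c
            = (∫ t in c..(c + h n), (u t - u c)) / h n := by
          rw [hInt, sub_div, mul_div_cancel_left₀ _ (hpos n).ne']
        rw [this, abs_div, abs_of_pos (hpos n), div_le_iff₀ (hpos n)]
        rw [Real.norm_eq_abs] at hbound
        calc |∫ t in c..(c + h n), (u t - u c)| ≤ (K * h n) * |c + h n - c| := hbound
          _ = K * h n * h n := by rw [add_sub_cancel_left, abs_of_pos (hpos n)]
      · have : Tendsto (fun n => (K : ℝ) * h n) atTop (𝓝 ((K : ℝ) * 0)) :=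
          tendsto_const_nhds.mul hh0
        simpa using this
    have hrw : ∀ n, A n = (∫ t in b..(b + h n), u t) / h n
        - (∫ t in a..(a + h n), u t) / h n := by
      intro n
      have hint1 : ∀ c d : ℝ, IntervalIntegrable u volume c d := fun c d =>
        hcont.intervalIntegrable _ _
      have e1 : A n = (∫ t in a..b, (u (t + h n) - u t)) / h n := by
        rw [hA]
        simp only
        rw [← intervalIntegral.integral_of_le hab, intervalIntegral.integral_div]
      have e2 : ∫ t in a..b, (u (t + h n) - u t)
          = (∫ t in (a + h n)..(b + h n), u t) - ∫ t in a..b, u t := by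
        rw [intervalIntegral.integral_sub ((by fun_prop :
          Continuous fun t : ℝ => u (t + h n)).intervalIntegrable _ _) (hint1 a b)]
        congr 1
        exact intervalIntegral.integral_comp_add_right u (h n)
      have e3 : (∫ t in (a + h n)..(b + h n), u t) - ∫ t in a..b, u t
          = (∫ t in b..(b + h n), u t) - ∫ t in a..(a + h n), u t := by
        have i1 : (∫ t in a..(a + h n), u t) + (∫ t in (a + h n)..(b + h n), u t)
            = ∫ t in a..(b + h n), u t :=
          intervalIntegral.integral_add_adjacent_intervals (hint1 _ _) (hint1 _ _)
        have i2 : (∫ t in a..b, u t) + (∫ t in b..(b + h n), u t)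
            = ∫ t in a..(b + h n), u t :=
          intervalIntegral.integral_add_adjacent_intervals (hint1 _ _) (hint1 _ _)
        linarith
      rw [e1, e2, e3, sub_div]
    have : Tendsto (fun n => (∫ t in b..(b + h n), u t) / h n
        - (∫ t in a..(a + h n), u t) / h n) atTop (𝓝 (u b - u a)) :=
      (key b).sub (key a)
    exact this.congr (fun n => (hrw n).symm)
  exact tendsto_nhds_unique claim2 claim1
lemma exists_zero_ge {u : ℝ → ℝ} (hsupp : HasCompactSupport u) :
    ∃ R : ℝ, 0 < R ∧ ∀ x : ℝ, R ≤ |x| → u x = 0 := by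
  obtain ⟨r, hr⟩ := hsupp.isBounded.subset_closedBall 0
  refine ⟨|r| + 1, by positivity, fun x hx => ?_⟩
  apply image_eq_zero_of_notMem_tsupport
  intro hmem
  have := hr hmem
  rw [Metric.mem_closedBall, Real.dist_eq, sub_zero] at this
  have : |x| ≤ |r| := this.trans (le_abs_self r)
  linarith

lemma deriv_abs_le {K : ℝ≥0} {u : ℝ → ℝ} (hu : LipschitzWith K u) (t : ℝ) :
    |deriv u t| ≤ K := by
  have := norm_deriv_le_of_lipschitz (𝕜 := ℝ) hu (x₀ := t)
  rwa [Real.norm_eq_abs] at this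

lemma integrableOn_abs_deriv {K : ℝ≥0} {u : ℝ → ℝ} (hu : LipschitzWith K u)
    {s : Set ℝ} (hs : volume s < ⊤) :
    IntegrableOn (fun t => |deriv u t|) s := by
  apply Integrable.mono' (g := fun _ => (K : ℝ))
  · exact (integrableOn_const_iff).mpr (Or.inr hs)
  · exact ((measurable_deriv u).abs).aestronglyMeasurable
  · filter_upwards with t
    rw [Real.norm_eq_abs, abs_abs]
    exact deriv_abs_le hu t

lemma abs_le_lintegral_right {K : ℝ≥0} {u : ℝ → ℝ} (hu : LipschitzWith K u)
    (hsupp : HasCompactSupport u) (y : ℝ) :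
    ENNReal.ofReal |u y| ≤ ∫⁻ t in Set.Ici y, ENNReal.ofReal |deriv u t| := by
  obtain ⟨R, hR, hzero⟩ := exists_zero_ge hsupp
  set b := max y R with hb
  have hyb : y ≤ b := le_max_left _ _
  have hub : u b = 0 := hzero b (le_trans (le_max_right _ _) (le_abs_self _))
  have hftc := lipschitz_sub_eq_integral_deriv hu hyb
  rw [hub, zero_sub] at hftc
  have h1 : |u y| ≤ ∫ t in Set.Ioc y b, |deriv u t| := by
    calc |u y| = |-(u y)| := (abs_neg _).symm
      _ = |∫ t in Set.Ioc y b, deriv u t| := by rw [← hftc]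
      _ ≤ ∫ t in Set.Ioc y b, |deriv u t| := by
          simpa [Real.norm_eq_abs] using
            MeasureTheory.norm_integral_le_integral_norm (μ := volume.restrict (Set.Ioc y b))
              (f := fun t => deriv u t)
  calc ENNReal.ofReal |u y| ≤ ENNReal.ofReal (∫ t in Set.Ioc y b, |deriv u t|) :=
        ENNReal.ofReal_le_ofReal h1
    _ = ∫⁻ t in Set.Ioc y b, ENNReal.ofReal |deriv u t| := by
        rw [ofReal_integral_eq_lintegral_ofReal
          (integrableOn_abs_deriv hu measure_Ioc_lt_top)
          (Filter.Eventually.of_forall fun t => abs_nonneg _)]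
    _ ≤ ∫⁻ t in Set.Ici y, ENNReal.ofReal |deriv u t| :=
        lintegral_mono_set (fun x hx => hx.1.le)

lemma abs_le_lintegral_left {K : ℝ≥0} {u : ℝ → ℝ} (hu : LipschitzWith K u)
    (hsupp : HasCompactSupport u) (y : ℝ) :
    ENNReal.ofReal |u y| ≤ ∫⁻ t in Set.Iic y, ENNReal.ofReal |deriv u t| := by
  obtain ⟨R, hR, hzero⟩ := exists_zero_ge hsupp
  set b := min y (-R) with hb
  have hyb : b ≤ y := min_le_left _ _
  have hub : u b = 0 := by
    apply hzero
    rw [abs_of_nonpos (le_trans (min_le_right _ _) (by linarith))]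
    have : b ≤ -R := min_le_right _ _
    linarith
  have hftc := lipschitz_sub_eq_integral_deriv hu hyb
  rw [hub, sub_zero] at hftc
  have h1 : |u y| ≤ ∫ t in Set.Ioc b y, |deriv u t| := by
    calc |u y| = |∫ t in Set.Ioc b y, deriv u t| := by rw [← hftc]
      _ ≤ ∫ t in Set.Ioc b y, |deriv u t| := by
          simpa [Real.norm_eq_abs] using
            MeasureTheory.norm_integral_le_integral_norm (μ := volume.restrict (Set.Ioc b y))
              (f := fun t => deriv u t)
  calc ENNReal.ofReal |u y| ≤ ENNReal.ofReal (∫ t in Set.Ioc b y, |deriv u t|) :=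
        ENNReal.ofReal_le_ofReal h1
    _ = ∫⁻ t in Set.Ioc b y, ENNReal.ofReal |deriv u t| := by
        rw [ofReal_integral_eq_lintegral_ofReal
          (integrableOn_abs_deriv hu measure_Ioc_lt_top)
          (Filter.Eventually.of_forall fun t => abs_nonneg _)]
    _ ≤ ∫⁻ t in Set.Iic y, ENNReal.ofReal |deriv u t| :=
        lintegral_mono_set Set.Ioc_subset_Iic_self
lemma sqrt_rpow_helper {e t : ℝ} (ht : 0 ≤ t) : t ≤ (e^2 + t^2) ^ ((1:ℝ)/2) := by
  have h1 : (t^2 : ℝ) ^ ((1:ℝ)/2) = t := by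
    rw [← Real.rpow_natCast t 2, ← Real.rpow_mul ht]
    norm_num
  calc t = (t^2) ^ ((1:ℝ)/2) := h1.symm
    _ ≤ (e^2 + t^2) ^ ((1:ℝ)/2) :=
        Real.rpow_le_rpow (sq_nonneg t) (by nlinarith [sq_nonneg e]) (by norm_num)

lemma weight_int_bound {e p : ℝ} (hp : 0 < p) {t : ℝ} (ht : 0 ≤ t) :
    ∫⁻ y in Set.Icc 0 t, ENNReal.ofReal ((e^2 + y^2) ^ ((p-1)/2)) ≤
      ENNReal.ofReal (max 1 (1/p) * (e^2 + t^2) ^ (p/2)) := by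
  have hbase : (0:ℝ) ≤ e^2 + t^2 := by positivity
  have hrnn : (0:ℝ) ≤ (e^2 + t^2) ^ (p/2) := Real.rpow_nonneg hbase _
  have htle : t ≤ (e^2 + t^2) ^ ((1:ℝ)/2) := sqrt_rpow_helper ht
  by_cases hp1 : 1 ≤ p
  · -- p ≥ 1 case
    rcases eq_or_lt_of_le hbase with h0 | hpos
    · -- e^2 + t^2 = 0, so t = 0
      have ht0 : t = 0 := by nlinarith [sq_nonneg e, sq_nonneg t]
      subst ht0
      rw [Set.Icc_self]
      have : volume ({0} : Set ℝ) = 0 := Real.volume_singleton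
      rw [setLIntegral_measure_zero _ _ this]
      exact bot_le
    · calc ∫⁻ y in Set.Icc 0 t, ENNReal.ofReal ((e^2 + y^2) ^ ((p-1)/2))
          ≤ ∫⁻ _ in Set.Icc 0 t, ENNReal.ofReal ((e^2 + t^2) ^ ((p-1)/2)) := by
            apply setLIntegral_mono' measurableSet_Icc
            intro y hy
            apply ENNReal.ofReal_le_ofReal
            apply Real.rpow_le_rpow (by positivity) (by nlinarith [hy.1, hy.2]) (by linarith)
        _ = ENNReal.ofReal ((e^2 + t^2) ^ ((p-1)/2)) * volume (Set.Icc 0 t) :=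
            setLIntegral_const _ _
        _ = ENNReal.ofReal ((e^2 + t^2) ^ ((p-1)/2)) * ENNReal.ofReal t := by
            rw [Real.volume_Icc, sub_zero]
        _ = ENNReal.ofReal ((e^2 + t^2) ^ ((p-1)/2) * t) := by
            rw [← ENNReal.ofReal_mul (Real.rpow_nonneg (by positivity) _)]
        _ ≤ ENNReal.ofReal ((e^2 + t^2) ^ ((p-1)/2) * (e^2 + t^2) ^ ((1:ℝ)/2)) := by
            apply ENNReal.ofReal_le_ofReal
            exact mul_le_mul_of_nonneg_left htle (Real.rpow_nonneg (by positivity) _)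
        _ = ENNReal.ofReal ((e^2 + t^2) ^ (p/2)) := by
            rw [← Real.rpow_add hpos]
            ring_nf
        _ ≤ ENNReal.ofReal (max 1 (1/p) * (e^2 + t^2) ^ (p/2)) := by
            apply ENNReal.ofReal_le_ofReal
            nth_rewrite 1 [← one_mul ((e^2 + t^2) ^ (p/2))]
            exact mul_le_mul_of_nonneg_right (le_max_left _ _) hrnn
  · -- p < 1 case
    push_neg at hp1
    have hIoc : ∫⁻ y in Set.Icc 0 t, ENNReal.ofReal ((e^2 + y^2) ^ ((p-1)/2)) =
        ∫⁻ y in Set.Ioc 0 t, ENNReal.ofReal ((e^2 + y^2) ^ ((p-1)/2)) :=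
      (setLIntegral_congr (Ioc_ae_eq_Icc (μ := volume))).symm
    rw [hIoc]
    have step1 : ∫⁻ y in Set.Ioc 0 t, ENNReal.ofReal ((e^2 + y^2) ^ ((p-1)/2)) ≤
        ∫⁻ y in Set.Ioc 0 t, ENNReal.ofReal (y ^ (p-1)) := by
      apply setLIntegral_mono' measurableSet_Ioc
      intro y hy
      apply ENNReal.ofReal_le_ofReal
      have hy0 : 0 < y := hy.1
      have h1 : (e^2 + y^2) ^ ((p-1)/2) ≤ (y^2) ^ ((p-1)/2) :=
        Real.rpow_le_rpow_of_nonpos (by positivity) (by nlinarith [sq_nonneg e]) (by linarith)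
      have h2 : (y^2 : ℝ) ^ ((p-1)/2) = y ^ (p-1) := by
        rw [← Real.rpow_natCast y 2, ← Real.rpow_mul hy0.le]
        norm_num
        ring_nf
      linarith
    have hint : IntegrableOn (fun y : ℝ => y ^ (p-1)) (Set.Ioc 0 t) := by
      have := intervalIntegrable_rpow' (a := 0) (b := t) (show (-1:ℝ) < p - 1 by linarith)
      rwa [intervalIntegrable_iff_integrableOn_Ioc_of_le ht] at this
    have step2 : ∫⁻ y in Set.Ioc 0 t, ENNReal.ofReal (y ^ (p-1)) =
        ENNReal.ofReal (∫ y in Set.Ioc 0 t, y ^ (p-1)) := by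
      rw [ofReal_integral_eq_lintegral_ofReal hint]
      filter_upwards [ae_restrict_mem measurableSet_Ioc] with y hy
      exact Real.rpow_nonneg hy.1.le _
    have step3 : (∫ y in Set.Ioc 0 t, y ^ (p-1)) = t ^ p / p := by
      rw [← intervalIntegral.integral_of_le ht,
        integral_rpow (Or.inl (by linarith : (-1:ℝ) < p - 1))]
      rw [sub_add_cancel, Real.zero_rpow hp.ne']
      ring_nf
    have step4 : t ^ p / p ≤ max 1 (1/p) * (e^2 + t^2) ^ (p/2) := by
      have h1 : t ^ p ≤ (e^2 + t^2) ^ (p/2) := by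
        calc t ^ p ≤ ((e^2 + t^2) ^ ((1:ℝ)/2)) ^ p :=
              Real.rpow_le_rpow ht htle hp.le
          _ = (e^2 + t^2) ^ (p/2) := by
              rw [← Real.rpow_mul hbase]
              ring_nf
      calc t ^ p / p = (1/p) * t ^ p := by ring
        _ ≤ (1/p) * (e^2 + t^2) ^ (p/2) :=
            mul_le_mul_of_nonneg_left h1 (by positivity)
        _ ≤ max 1 (1/p) * (e^2 + t^2) ^ (p/2) :=
            mul_le_mul_of_nonneg_right (le_max_right _ _) hrnn
    calc ∫⁻ y in Set.Ioc 0 t, ENNReal.ofReal ((e^2 + y^2) ^ ((p-1)/2))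
        ≤ ∫⁻ y in Set.Ioc 0 t, ENNReal.ofReal (y ^ (p-1)) := step1
      _ = ENNReal.ofReal (∫ y in Set.Ioc 0 t, y ^ (p-1)) := step2
      _ = ENNReal.ofReal (t ^ p / p) := by rw [step3]
      _ ≤ ENNReal.ofReal (max 1 (1/p) * (e^2 + t^2) ^ (p/2)) := ENNReal.ofReal_le_ofReal step4

lemma weight_int_bound_neg {e p : ℝ} (hp : 0 < p) {t : ℝ} (ht : t ≤ 0) :
    ∫⁻ y in Set.Icc t 0, ENNReal.ofReal ((e^2 + y^2) ^ ((p-1)/2)) ≤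
      ENNReal.ofReal (max 1 (1/p) * (e^2 + t^2) ^ (p/2)) := by
  have hemb : MeasurableEmbedding (fun x : ℝ => -x) :=
    (Homeomorph.neg ℝ).measurableEmbedding
  have hmp : MeasurePreserving (fun x : ℝ => -x) volume volume :=
    Measure.measurePreserving_neg volume
  have key := hmp.setLIntegral_comp_preimage_emb hemb
    (fun y => ENNReal.ofReal ((e^2 + y^2) ^ ((p-1)/2))) (Set.Icc 0 (-t))
  have hpre : (fun x : ℝ => -x) ⁻¹' (Set.Icc 0 (-t)) = Set.Icc t 0 := by
    ext x
    simp only [Set.mem_preimage, Set.mem_Icc]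
    constructor <;> intro h <;> constructor <;> linarith [h.1, h.2]
  rw [hpre] at key
  have heq : ∀ x : ℝ, ENNReal.ofReal ((e^2 + (-x)^2) ^ ((p-1)/2)) =
      ENNReal.ofReal ((e^2 + x^2) ^ ((p-1)/2)) := fun x => by rw [neg_sq]
  simp only [heq] at key
  rw [key]
  have := weight_int_bound (e := e) hp (t := -t) (by linarith)
  simpa [neg_sq] using this
lemma hardy_swap {F D : ℝ → ℝ≥0∞} (hF : Measurable F) (hD : Measurable D) :
    ∫⁻ y in Set.Ici (0:ℝ), (F y * ∫⁻ t in Set.Ici y, D t)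
      = ∫⁻ t, (∫⁻ y in Set.Icc 0 t, F y) * D t := by
  set k : ℝ → ℝ → ℝ≥0∞ := fun y t => (Set.Ici (0:ℝ)).indicator F y *
    (Set.Ici y).indicator D t with hk
  have hmeas : AEMeasurable (Function.uncurry k)
      ((volume : Measure ℝ).prod (volume : Measure ℝ)) := by
    apply Measurable.aemeasurable
    have h1 : Measurable (fun p : ℝ × ℝ => (Set.Ici (0:ℝ)).indicator F p.1) :=
      (hF.indicator measurableSet_Ici).comp measurable_fst
    have h2 : Measurable (fun p : ℝ × ℝ => (Set.Ici p.1).indicator D p.2) := by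
      have heq : (fun p : ℝ × ℝ => (Set.Ici p.1).indicator D p.2) =
          {q : ℝ × ℝ | q.1 ≤ q.2}.indicator (fun q => D q.2) := by
        ext p
        by_cases h : p.1 ≤ p.2 <;>
          simp [Set.indicator, h, Set.mem_Ici]
      rw [heq]
      exact ((hD.comp measurable_snd).indicator
        (measurableSet_le measurable_fst measurable_snd))
    exact h1.mul h2
  have swap := lintegral_lintegral_swap hmeas
  have lhs_eq : ∫⁻ y, ∫⁻ t, k y t = ∫⁻ y in Set.Ici (0:ℝ), (F y * ∫⁻ t in Set.Ici y, D t) := by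
    have : ∀ y, ∫⁻ t, k y t = (Set.Ici (0:ℝ)).indicator
        (fun y => F y * ∫⁻ t in Set.Ici y, D t) y := by
      intro y
      rw [hk]
      simp only
      rw [lintegral_const_mul _ (hD.indicator measurableSet_Ici),
        lintegral_indicator measurableSet_Ici _]
      by_cases h : y ∈ Set.Ici (0:ℝ) <;> simp [Set.indicator, h]
    rw [funext this, lintegral_indicator measurableSet_Ici _]
  have rhs_eq : ∫⁻ t, ∫⁻ y, k y t = ∫⁻ t, (∫⁻ y in Set.Icc 0 t, F y) * D t := by
    congr 1
    ext t
    have : ∀ y, k y t = (Set.Icc (0:ℝ) t).indicator (fun y => F y * D t) y := by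
      intro y
      rw [hk]
      by_cases h1 : (0:ℝ) ≤ y <;> by_cases h2 : y ≤ t <;>
        simp [Set.indicator, h1, h2, Set.mem_Icc, Set.mem_Ici]
    rw [funext this, lintegral_indicator measurableSet_Icc _,
      lintegral_mul_const _ hF]
  rw [← lhs_eq, ← rhs_eq]
  exact swap

lemma hardy_swap_neg {F D : ℝ → ℝ≥0∞} (hF : Measurable F) (hD : Measurable D) :
    ∫⁻ y in Set.Iio (0:ℝ), (F y * ∫⁻ t in Set.Iic y, D t)
      = ∫⁻ t, (∫⁻ y in Set.Iio 0 ∩ Set.Ici t, F y) * D t := by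
  set k : ℝ → ℝ → ℝ≥0∞ := fun y t => (Set.Iio (0:ℝ)).indicator F y *
    (Set.Iic y).indicator D t with hk
  have hmeas : AEMeasurable (Function.uncurry k)
      ((volume : Measure ℝ).prod (volume : Measure ℝ)) := by
    apply Measurable.aemeasurable
    have h1 : Measurable (fun p : ℝ × ℝ => (Set.Iio (0:ℝ)).indicator F p.1) :=
      (hF.indicator measurableSet_Iio).comp measurable_fst
    have h2 : Measurable (fun p : ℝ × ℝ => (Set.Iic p.1).indicator D p.2) := by
      have heq : (fun p : ℝ × ℝ => (Set.Iic p.1).indicator D p.2) =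
          {q : ℝ × ℝ | q.2 ≤ q.1}.indicator (fun q => D q.2) := by
        ext p
        by_cases h : p.2 ≤ p.1 <;>
          simp [Set.indicator, h, Set.mem_Iic]
      rw [heq]
      exact ((hD.comp measurable_snd).indicator
        (measurableSet_le measurable_snd measurable_fst))
    exact h1.mul h2
  have swap := lintegral_lintegral_swap hmeas
  have lhs_eq : ∫⁻ y, ∫⁻ t, k y t = ∫⁻ y in Set.Iio (0:ℝ), (F y * ∫⁻ t in Set.Iic y, D t) := by
    have : ∀ y, ∫⁻ t, k y t = (Set.Iio (0:ℝ)).indicator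
        (fun y => F y * ∫⁻ t in Set.Iic y, D t) y := by
      intro y
      rw [hk]
      simp only
      rw [lintegral_const_mul _ (hD.indicator measurableSet_Iic),
        lintegral_indicator measurableSet_Iic _]
      by_cases h : y ∈ Set.Iio (0:ℝ) <;> simp [Set.indicator, h]
    rw [funext this, lintegral_indicator measurableSet_Iio _]
  have rhs_eq : ∫⁻ t, ∫⁻ y, k y t = ∫⁻ t, (∫⁻ y in Set.Iio 0 ∩ Set.Ici t, F y) * D t := by
    congr 1
    ext t
    have : ∀ y, k y t = (Set.Iio (0:ℝ) ∩ Set.Ici t).indicator (fun y => F y * D t) y := by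
      intro y
      rw [hk]
      by_cases h1 : y < (0:ℝ) <;> by_cases h2 : t ≤ y <;>
        simp [Set.indicator, h1, h2, Set.mem_Iio, Set.mem_Ici, Set.mem_Iic]
    rw [funext this, lintegral_indicator (measurableSet_Iio.inter measurableSet_Ici) _,
      lintegral_mul_const _ hF]
  rw [← lhs_eq, ← rhs_eq]
  exact swap
lemma real_const_bound {a q : ℝ} (ha : -1 < a) (hq1 : 1 ≤ q) :
    (min 1 (1+a) / 4) * (2 * max 1 (1 / ((1+a)/q))) ^ (1/q : ℝ) ≤ 1 := by
  have hq0 : (0:ℝ) < q := by linarith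
  have h1a : (0:ℝ) < 1 + a := by linarith
  set m := min 1 (1+a) with hmdef
  have hm : 0 < m := lt_min one_pos h1a
  have hm1 : m ≤ 1 := min_le_left _ _
  have hma : m ≤ 1 + a := min_le_right _ _
  set c := m / 4 with hcdef
  have hc : 0 < c := by positivity
  set C := max 1 (1 / ((1+a)/q)) with hCdef
  have hC1 : (1:ℝ) ≤ C := le_max_left _ _
  have hC0 : (0:ℝ) ≤ C := by linarith
  have hpinv : 1 / ((1+a)/q) = q / (1+a) := by
    rw [one_div_div]
  -- key : 2 * C ≤ (1/c)^q
  have b1 : (1:ℝ) + q ≤ 2 ^ (q:ℝ) := by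
    have := one_add_mul_self_le_rpow_one_add (by norm_num : (-1:ℝ) ≤ 1) hq1
    norm_num at this
    convert this using 2 <;> norm_num
  have b2 : (2:ℝ) ≤ 2 ^ (q:ℝ) := by
    calc (2:ℝ) = 2 ^ (1:ℝ) := (Real.rpow_one 2).symm
      _ ≤ 2 ^ (q:ℝ) := Real.rpow_le_rpow_of_exponent_le one_le_two hq1
  have b3 : 1/m ≤ (1/m) ^ (q:ℝ) := by
    have h1m : (1:ℝ) ≤ 1/m := by
      rw [le_div_iff₀ hm]; linarith
    calc 1/m = (1/m) ^ (1:ℝ) := (Real.rpow_one _).symm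
      _ ≤ (1/m) ^ (q:ℝ) := Real.rpow_le_rpow_of_exponent_le h1m hq1
  have b4 : (1/c) ^ (q:ℝ) = 2^(q:ℝ) * 2^(q:ℝ) * (1/m)^(q:ℝ) := by
    rw [← Real.mul_rpow (by norm_num) (by positivity),
      ← Real.mul_rpow (by positivity) (by positivity)]
    congr 1
    rw [hcdef]
    field_simp
    ring
  have s1 : 2 * (1+q) ≤ 2^(q:ℝ) * 2^(q:ℝ) := mul_le_mul b2 b1 (by positivity) (by positivity)
  have s2 : (2 * (1+q)) * (1/m) ≤ (2^(q:ℝ) * 2^(q:ℝ)) * ((1/m)^(q:ℝ)) :=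
    mul_le_mul s1 b3 (by positivity) (by positivity)
  have hCle : C ≤ (1+q)/m := by
    apply max_le
    · rw [le_div_iff₀ hm]; linarith
    · rw [hpinv]
      apply div_le_div₀ (by positivity) (by linarith) hm hma
  have key : 2 * C ≤ (1/c) ^ (q:ℝ) := by
    calc 2 * C ≤ 2 * ((1+q)/m) := by linarith [hCle]
      _ = (2 * (1+q)) * (1/m) := by ring
      _ ≤ (2^(q:ℝ) * 2^(q:ℝ)) * ((1/m)^(q:ℝ)) := s2
      _ = (1/c) ^ (q:ℝ) := b4.symm
  have h2C : (2*C) ^ (1/q : ℝ) ≤ 1/c := by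
    calc (2*C) ^ (1/q : ℝ) ≤ ((1/c) ^ (q:ℝ)) ^ (1/q : ℝ) :=
        Real.rpow_le_rpow (by positivity) key (by positivity)
      _ = (1/c) ^ ((q:ℝ) * (1/q)) := by rw [← Real.rpow_mul (by positivity)]
      _ = 1/c := by rw [mul_one_div_cancel hq0.ne', Real.rpow_one]
  have hfin : c * (1/c) = 1 := by field_simp
  calc c * (2*C) ^ (1/q : ℝ) ≤ c * (1/c) := mul_le_mul_of_nonneg_left h2C hc.le
    _ = 1 := hfin
/-- **Lemma 3.8** (one-dimensional ε-stable `L¹` Caffarelli–Kohn–Nirenberg type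
inequality). Let `a > -1`. There is a constant `c = c(a) > 0` such that for every
`ε ∈ [0,1]`, every `q ≥ 1` with `q a ≤ 1 + a`, and every compactly supported Lipschitz
function `u : ℝ → ℝ`,
`c (∫_ℝ (ε²+y²)^{a/2} |u|^q dy)^{1/q} ≤ ∫_ℝ (ε²+y²)^{(1+a)/(2q)} |u'| dy`. -/
theorem one_dimensional_CKN_L1
    (a : ℝ) (ha : -1 < a) :
    ∃ c : ℝ, 0 < c ∧
      ∀ ε : ℝ, ε ∈ Icc (0:ℝ) 1 →
      ∀ q : ℝ, 1 ≤ q → q * a ≤ 1 + a →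
      ∀ u : ℝ → ℝ, (∃ K : ℝ≥0, LipschitzWith K u) → HasCompactSupport u →
        ENNReal.ofReal c *
            (∫⁻ y : ℝ, ENNReal.ofReal ((ε ^ 2 + y ^ 2) ^ (a / 2) * |u y| ^ q)) ^ (1 / q)
          ≤ ∫⁻ y : ℝ,
              ENNReal.ofReal ((ε ^ 2 + y ^ 2) ^ ((1 + a) / (2 * q)) * |deriv u y|) := by
  have h1a : (0:ℝ) < 1 + a := by linarith
  refine ⟨min 1 (1+a) / 4, by positivity, ?_⟩
  intro ε hε q hq1 hqa u hKex hsupp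
  obtain ⟨K, hK⟩ := hKex
  have hq0 : (0:ℝ) < q := by linarith
  set p : ℝ := (1+a)/q with hpdef
  have hp : 0 < p := by positivity
  set C : ℝ := max 1 (1/p) with hCdef
  have hC0 : (0:ℝ) ≤ C := le_trans zero_le_one (le_max_left _ _)
  set cc : ℝ := min 1 (1+a) / 4 with hccdef
  have hcc : 0 < cc := by positivity
  -- basic measurable functions
  set D : ℝ → ℝ≥0∞ := fun t => ENNReal.ofReal |deriv u t| with hDdef
  have hDmeas : Measurable D := ENNReal.measurable_ofReal.comp (measurable_deriv u).abs
  set wE : ℝ → ℝ≥0∞ := fun t => ENNReal.ofReal ((ε^2 + t^2) ^ (p/2)) with hwEdef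
  have hbase_meas : Measurable (fun t : ℝ => ε^2 + t^2) := by fun_prop
  have hwEmeas : Measurable wE :=
    ENNReal.measurable_ofReal.comp (by fun_prop : Measurable fun t : ℝ => (ε^2 + t^2) ^ (p/2))
  set vE : ℝ → ℝ≥0∞ := fun t => ENNReal.ofReal ((ε^2 + t^2) ^ ((p-1)/2)) with hvEdef
  have hvEmeas : Measurable vE :=
    ENNReal.measurable_ofReal.comp
      (by fun_prop : Measurable fun t : ℝ => (ε^2 + t^2) ^ ((p-1)/2))
  set I : ℝ≥0∞ := ∫⁻ y : ℝ,
      ENNReal.ofReal ((ε ^ 2 + y ^ 2) ^ ((1 + a) / (2 * q)) * |deriv u y|) with hIdef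
  have hexp : (1 + a) / (2 * q) = p / 2 := by
    rw [hpdef, div_div, mul_comm]
  have hIeq : I = ∫⁻ t, wE t * D t := by
    rw [hIdef]
    congr 1
    ext t
    rw [hexp, ENNReal.ofReal_mul (Real.rpow_nonneg (by positivity) _)]
  -- the key pointwise bound
  have hbnn : ∀ y : ℝ, (0:ℝ) ≤ ε^2 + y^2 := fun y => by positivity
  have hP : ∀ y : ℝ, ENNReal.ofReal ((ε^2 + y^2) ^ (p/2) * |u y|) ≤ I := by
    intro y
    rcases le_or_gt 0 y with hy | hy
    · calc ENNReal.ofReal ((ε^2 + y^2) ^ (p/2) * |u y|)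
          = wE y * ENNReal.ofReal |u y| :=
            ENNReal.ofReal_mul (Real.rpow_nonneg (hbnn y) _)
        _ ≤ wE y * ∫⁻ t in Set.Ici y, D t :=
            mul_le_mul_right (abs_le_lintegral_right hK hsupp y) _
        _ = ∫⁻ t in Set.Ici y, wE y * D t :=
            (lintegral_const_mul _ hDmeas).symm
        _ ≤ ∫⁻ t in Set.Ici y, wE t * D t := by
            apply setLIntegral_mono' measurableSet_Ici
            intro t ht
            refine mul_le_mul_left (ENNReal.ofReal_le_ofReal ?_) _
            apply Real.rpow_le_rpow (hbnn y) _ (by positivity)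
            have : y^2 ≤ t^2 := by nlinarith [Set.mem_Ici.mp ht]
            linarith
        _ ≤ ∫⁻ t, wE t * D t := setLIntegral_le_lintegral _ _
        _ = I := hIeq.symm
    · calc ENNReal.ofReal ((ε^2 + y^2) ^ (p/2) * |u y|)
          = wE y * ENNReal.ofReal |u y| :=
            ENNReal.ofReal_mul (Real.rpow_nonneg (hbnn y) _)
        _ ≤ wE y * ∫⁻ t in Set.Iic y, D t :=
            mul_le_mul_right (abs_le_lintegral_left hK hsupp y) _
        _ = ∫⁻ t in Set.Iic y, wE y * D t :=
            (lintegral_const_mul _ hDmeas).symm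
        _ ≤ ∫⁻ t in Set.Iic y, wE t * D t := by
            apply setLIntegral_mono' measurableSet_Iic
            intro t ht
            refine mul_le_mul_left (ENNReal.ofReal_le_ofReal ?_) _
            apply Real.rpow_le_rpow (hbnn y) _ (by positivity)
            have ht' : t ≤ y := Set.mem_Iic.mp ht
            have : y^2 ≤ t^2 := by nlinarith
            linarith
        _ ≤ ∫⁻ t, wE t * D t := setLIntegral_le_lintegral _ _
        _ = I := hIeq.symm
  -- the Hardy-type inequality for J
  set F : ℝ → ℝ≥0∞ := fun y => vE y * ENNReal.ofReal |u y| with hFdef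
  have hFmeas : Measurable F :=
    hvEmeas.mul (ENNReal.measurable_ofReal.comp hK.continuous.measurable.abs)
  set J : ℝ≥0∞ := ∫⁻ y, F y with hJdef
  have hJpos : ∫⁻ y in Set.Ici (0:ℝ), F y ≤ ENNReal.ofReal C * I := by
    calc ∫⁻ y in Set.Ici (0:ℝ), F y
        ≤ ∫⁻ y in Set.Ici (0:ℝ), (vE y * ∫⁻ t in Set.Ici y, D t) := by
          apply setLIntegral_mono' measurableSet_Ici
          intro y _
          exact mul_le_mul_right (abs_le_lintegral_right hK hsupp y) _
      _ = ∫⁻ t, (∫⁻ y in Set.Icc 0 t, vE y) * D t := hardy_swap hvEmeas hDmeas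
      _ ≤ ∫⁻ t, (ENNReal.ofReal C * wE t) * D t := by
          apply lintegral_mono
          intro t
          refine mul_le_mul_left ?_ _
          rcases le_or_gt 0 t with ht | ht
          · calc ∫⁻ y in Set.Icc 0 t, vE y
                ≤ ENNReal.ofReal (C * (ε^2 + t^2) ^ (p/2)) := weight_int_bound hp ht
              _ = ENNReal.ofReal C * wE t := ENNReal.ofReal_mul hC0
          · rw [Set.Icc_eq_empty (by linarith)]
            simp
      _ = ENNReal.ofReal C * ∫⁻ t, wE t * D t := by
          rw [← lintegral_const_mul _ (f := fun t => wE t * D t) (hwEmeas.mul hDmeas)]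
          congr 1; ext t; ring
      _ = ENNReal.ofReal C * I := by rw [hIeq]
  have hJneg : ∫⁻ y in Set.Iio (0:ℝ), F y ≤ ENNReal.ofReal C * I := by
    calc ∫⁻ y in Set.Iio (0:ℝ), F y
        ≤ ∫⁻ y in Set.Iio (0:ℝ), (vE y * ∫⁻ t in Set.Iic y, D t) := by
          apply setLIntegral_mono' measurableSet_Iio
          intro y _
          exact mul_le_mul_right (abs_le_lintegral_left hK hsupp y) _
      _ = ∫⁻ t, (∫⁻ y in Set.Iio 0 ∩ Set.Ici t, vE y) * D t := hardy_swap_neg hvEmeas hDmeas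
      _ ≤ ∫⁻ t, (ENNReal.ofReal C * wE t) * D t := by
          apply lintegral_mono
          intro t
          refine mul_le_mul_left ?_ _
          rcases le_or_gt t 0 with ht | ht
          · calc ∫⁻ y in Set.Iio 0 ∩ Set.Ici t, vE y
                ≤ ∫⁻ y in Set.Icc t 0, vE y := by
                  apply lintegral_mono_set
                  intro x hx
                  exact ⟨hx.2, le_of_lt hx.1⟩
              _ ≤ ENNReal.ofReal (C * (ε^2 + t^2) ^ (p/2)) := weight_int_bound_neg hp ht
              _ = ENNReal.ofReal C * wE t := ENNReal.ofReal_mul hC0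
          · have : Set.Iio 0 ∩ Set.Ici t = (∅ : Set ℝ) := by
              ext x
              simp only [Set.mem_inter_iff, Set.mem_Iio, Set.mem_Ici, Set.mem_empty_iff_false,
                iff_false, not_and, not_le]
              intro hx; linarith
            rw [this]
            simp
      _ = ENNReal.ofReal C * ∫⁻ t, wE t * D t := by
          rw [← lintegral_const_mul _ (f := fun t => wE t * D t) (hwEmeas.mul hDmeas)]
          congr 1; ext t; ring
      _ = ENNReal.ofReal C * I := by rw [hIeq]
  have hJ : J ≤ ENNReal.ofReal (2*C) * I := by
    have hsplit : J = (∫⁻ y in Set.Ici (0:ℝ), F y) + ∫⁻ y in Set.Iio (0:ℝ), F y := by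
      rw [hJdef, ← lintegral_add_compl F (measurableSet_Ici (a := (0:ℝ))), Set.compl_Ici]
    rw [hsplit]
    calc (∫⁻ y in Set.Ici (0:ℝ), F y) + ∫⁻ y in Set.Iio (0:ℝ), F y
        ≤ ENNReal.ofReal C * I + ENNReal.ofReal C * I := add_le_add hJpos hJneg
      _ = ENNReal.ofReal (2*C) * I := by
          rw [two_mul, ENNReal.ofReal_add hC0 hC0, add_mul]
  -- main case split on I
  rcases eq_or_ne I ⊤ with hItop | hItop
  · exact le_top.trans_eq hItop.symm
  -- T bound
  set T : ℝ≥0∞ := ∫⁻ y : ℝ, ENNReal.ofReal ((ε ^ 2 + y ^ 2) ^ (a / 2) * |u y| ^ q) with hTdef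
  have hae : ∀ᵐ y : ℝ, 0 < ε^2 + y^2 := by
    rw [MeasureTheory.ae_iff]
    refine measure_mono_null (t := {(0:ℝ)}) ?_ Real.volume_singleton
    intro y hy
    simp only [Set.mem_setOf_eq, not_lt] at hy
    have h1 : ε^2 + y^2 = 0 := le_antisymm hy (hbnn y)
    have h2 : y^2 = 0 := by nlinarith [sq_nonneg ε, sq_nonneg y]
    simpa using pow_eq_zero_iff (n := 2) (by norm_num) |>.mp h2
  have hTle1 : T ≤ ∫⁻ y, ENNReal.ofReal ((ε^2+y^2)^(p/2) * |u y|) ^ (q - 1) * F y := by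
    rw [hTdef]
    apply lintegral_mono_ae
    filter_upwards [hae] with y hy
    have habs : (0:ℝ) ≤ |u y| := abs_nonneg _
    have hIdent : (ε^2+y^2) ^ (a/2) * |u y| ^ q =
        ((ε^2+y^2)^(p/2) * |u y|) ^ (q-1) * ((ε^2+y^2)^((p-1)/2) * |u y|) := by
      rcases eq_or_ne (u y) 0 with hu0 | hu0
      · rw [hu0]
        simp only [abs_zero, mul_zero, Real.zero_rpow hq0.ne', mul_zero]
      · have habs' : (0:ℝ) < |u y| := abs_pos.mpr hu0
        rw [Real.mul_rpow (Real.rpow_nonneg (hbnn y) _) habs]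
        have e2 : ((ε^2+y^2)^(p/2)) ^ (q-1) = (ε^2+y^2) ^ (p/2*(q-1)) :=
          (Real.rpow_mul (hbnn y) _ _).symm
        have e5 : |u y| ^ (q-1) * |u y| = |u y| ^ q := by
          nth_rewrite 2 [← Real.rpow_one |u y|]
          rw [← Real.rpow_add habs']
          norm_num
        rw [e2]
        have : (ε^2+y^2) ^ (p/2*(q-1)) * |u y| ^ (q-1) * ((ε^2+y^2)^((p-1)/2) * |u y|) =
            ((ε^2+y^2) ^ (p/2*(q-1)) * (ε^2+y^2)^((p-1)/2)) * (|u y| ^ (q-1) * |u y|) := by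
          ring
        rw [this, e5, ← Real.rpow_add hy]
        have hexp2 : p/2*(q-1) + (p-1)/2 = a/2 := by
          rw [hpdef]
          field_simp
          ring
        rw [hexp2]
    rw [hIdent]
    have hAnn : (0:ℝ) ≤ (ε^2+y^2)^(p/2) * |u y| :=
      mul_nonneg (Real.rpow_nonneg (hbnn y) _) habs
    rw [ENNReal.ofReal_mul (Real.rpow_nonneg hAnn _),
      ENNReal.ofReal_rpow_of_nonneg hAnn (by linarith : (0:ℝ) ≤ q - 1)]
    refine mul_le_mul' le_rfl ?_
    rw [hFdef]
    simp only
    rw [ENNReal.ofReal_mul (Real.rpow_nonneg (hbnn y) _)]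
  have hTle2 : T ≤ I ^ (q-1) * J := by
    calc T ≤ ∫⁻ y, ENNReal.ofReal ((ε^2+y^2)^(p/2) * |u y|) ^ (q - 1) * F y := hTle1
      _ ≤ ∫⁻ y, I ^ (q-1) * F y := by
          apply lintegral_mono
          intro y
          exact mul_le_mul_left (ENNReal.rpow_le_rpow (hP y) (by linarith)) _
      _ = I ^ (q-1) * J := by
          rw [hJdef, lintegral_const_mul' _ _ (ENNReal.rpow_ne_top_of_nonneg
            (by linarith) hItop)]
  have hTle3 : T ≤ ENNReal.ofReal (2*C) * I ^ q := by
    calc T ≤ I ^ (q-1) * (ENNReal.ofReal (2*C) * I) :=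
        le_trans hTle2 (mul_le_mul_right hJ _)
      _ = ENNReal.ofReal (2*C) * (I ^ (q-1) * I) := by ring
      _ ≤ ENNReal.ofReal (2*C) * I ^ q := by
          refine mul_le_mul_right ?_ _
          rcases eq_or_ne I 0 with hI0 | hI0
          · rw [hI0]; simp
          · conv_rhs => rw [show q = (q-1) + 1 by ring]
            rw [ENNReal.rpow_add _ _ hI0 hItop, ENNReal.rpow_one]
  -- finish
  have hfinal : ENNReal.ofReal cc * T ^ (1/q : ℝ) ≤ I := by
    calc ENNReal.ofReal cc * T ^ (1/q : ℝ)
        ≤ ENNReal.ofReal cc * (ENNReal.ofReal (2*C) * I ^ q) ^ (1/q : ℝ) :=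
          mul_le_mul_right (ENNReal.rpow_le_rpow hTle3 (by positivity)) _
      _ = ENNReal.ofReal cc * (ENNReal.ofReal (2*C) ^ (1/q : ℝ) * I) := by
          rw [ENNReal.mul_rpow_of_nonneg _ _ (by positivity), ← ENNReal.rpow_mul,
            mul_one_div_cancel hq0.ne', ENNReal.rpow_one]
      _ = ENNReal.ofReal (cc * (2*C) ^ (1/q : ℝ)) * I := by
          rw [ENNReal.ofReal_rpow_of_nonneg (by positivity : (0:ℝ) ≤ 2*C)
            (by positivity : (0:ℝ) ≤ 1/q), ← mul_assoc, ← ENNReal.ofReal_mul hcc.le]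
      _ ≤ 1 * I := by
          refine mul_le_mul_left ?_ _
          rw [← ENNReal.ofReal_one]
          apply ENNReal.ofReal_le_ofReal
          exact real_const_bound ha hq1
      _ = I := one_mul I
  exact hfinal
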